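/- arXiv:2402.18803 — 3 statements merged into one kernel-verified Lean document; each statement's English description precedes it below -/
import Mathlib

section
/- For p ≥ 1, a probability weight vector w, and nonnegative vectors S, S' in R^g, M_p(S + S'; w) − M_p(S; w) ≤ ‖S'‖_∞, where ‖S'‖_∞ = max_i S'_i. In particular, the weighted power-mean malfare is 1-Lipschitz with respect to the sup norm on the nonnegative orthant. -/
open Finset

/-- Weighted power mean `M_p(S; w) = (∑ i, w i * S i ^ p) ^ (1/p)` (real exponent). -/
noncomputable def powMean {g : ℕ} (p : ℝ) (w S : Fin g → ℝ) : ℝ :=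
  (∑ i, w i * S i ^ p) ^ (1 / p)

/-!
Absorbing the weights as `w i ^ (1/p) * S i` turns `M_p(·; w)` into an unweighted `ℓ^p` norm, so
Minkowski's inequality gives `M_p(S + S'; w) ≤ M_p(S; w) + M_p(S'; w)`. Since `M_p` is monotone and
`S' ≤ c := max_i S'_i` pointwise, `M_p(S + S'; w) ≤ M_p(S + c; w) ≤ M_p(S; w) + M_p(c; w)`, and
`M_p(c; w) = c` because `w` is a probability vector.
-/

lemma rpow_one_div_mul_rpow {a b p : ℝ} (ha : 0 ≤ a) (hb : 0 ≤ b) (hp : p ≠ 0) :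
    (a ^ (1 / p) * b) ^ p = a * b ^ p := by
  rw [Real.mul_rpow (Real.rpow_nonneg ha _) hb, ← Real.rpow_mul ha, one_div_mul_cancel hp,
    Real.rpow_one]

section PowMean

variable {g : ℕ} {p : ℝ} {w : Fin g → ℝ}

lemma powMean_eq_Lp_norm (hp : p ≠ 0) (hw : ∀ i, 0 ≤ w i) {S : Fin g → ℝ} (hS : ∀ i, 0 ≤ S i) :
    powMean p w S = (∑ i, (w i ^ (1 / p) * S i) ^ p) ^ (1 / p) := by
  simp only [powMean, rpow_one_div_mul_rpow (hw _) (hS _) hp]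

lemma powMean_add_le (hp : 1 ≤ p) (hw : ∀ i, 0 ≤ w i) {S T : Fin g → ℝ}
    (hS : ∀ i, 0 ≤ S i) (hT : ∀ i, 0 ≤ T i) :
    powMean p w (S + T) ≤ powMean p w S + powMean p w T := by
  have hp0 : p ≠ 0 := by positivity
  have hwp : ∀ i, 0 ≤ w i ^ (1 / p) := fun i => Real.rpow_nonneg (hw i) _
  rw [powMean_eq_Lp_norm (S := S + T) hp0 hw (fun i => add_nonneg (hS i) (hT i)),
    powMean_eq_Lp_norm hp0 hw hS, powMean_eq_Lp_norm hp0 hw hT]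
  simpa only [Pi.add_apply, mul_add] using Real.Lp_add_le_of_nonneg univ hp
    (fun i _ => mul_nonneg (hwp i) (hS i)) (fun i _ => mul_nonneg (hwp i) (hT i))

lemma powMean_mono (hp : 0 ≤ p) (hw : ∀ i, 0 ≤ w i) {S T : Fin g → ℝ}
    (hS : ∀ i, 0 ≤ S i) (hST : S ≤ T) :
    powMean p w S ≤ powMean p w T := by
  refine Real.rpow_le_rpow (sum_nonneg fun i _ => mul_nonneg (hw i) (Real.rpow_nonneg (hS i) _))
    (sum_le_sum fun i _ => ?_) (by positivity)
  exact mul_le_mul_of_nonneg_left (Real.rpow_le_rpow (hS i) (hST i) hp) (hw i)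

lemma powMean_const (hp : p ≠ 0) (hw1 : ∑ i, w i = 1) {c : ℝ} (hc : 0 ≤ c) :
    powMean p w (fun _ => c) = c := by
  rw [powMean, ← sum_mul, hw1, one_mul, ← Real.rpow_mul hc, mul_one_div_cancel hp, Real.rpow_one]

end PowMean

theorem powMean_lipschitz_sup_norm {g : ℕ} (hg : 0 < g) (p : ℝ) (hp : 1 ≤ p)
    (w S S' : Fin g → ℝ)
    (hw : ∀ i, 0 ≤ w i) (hw1 : ∑ i, w i = 1)
    (hS : ∀ i, 0 ≤ S i) (hS' : ∀ i, 0 ≤ S' i) :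
    powMean p w (S + S') - powMean p w S ≤
      Finset.univ.sup' (Finset.univ_nonempty_iff.mpr ⟨⟨0, hg⟩⟩) S' := by
  set c := Finset.univ.sup' (Finset.univ_nonempty_iff.mpr ⟨⟨0, hg⟩⟩) S'
  have hS'_le : ∀ i, S' i ≤ c := fun i => le_sup' S' (mem_univ i)
  have hc : 0 ≤ c := (hS' ⟨0, hg⟩).trans (hS'_le _)
  have hp0 : 0 < p := zero_lt_one.trans_le hp
  have key : powMean p w (S + S') ≤ powMean p w S + c :=
    calc powMean p w (S + S')
        ≤ powMean p w (S + fun _ => c) :=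
          powMean_mono hp0.le hw (fun i => add_nonneg (hS i) (hS' i))
            (fun i => add_le_add_right (hS'_le i) _)
      _ ≤ powMean p w S + powMean p w (fun _ => c) :=
          powMean_add_le hp hw hS (fun _ => hc)
      _ = powMean p w S + c := by rw [powMean_const hp0.ne' hw1 hc]
  linarith
end

section
/- Fix a group index i, real-valued functions R̂_j on a hypothesis class H for j ≠ i, a function R_i on H (the true risk of group i), numbers η ≥ ε ≥ 0, and a monotone malfare W : R^g → R. Define H* = { h ∈ H : W(j ↦ (R̂_j(h) if j ≠ i, R_i(h) − η if j = i)) ≤ inf_{h' ∈ H} W(j ↦ (R̂_j(h') if j ≠ i, R_i(h') + ε if j = i)) }. Suppose R̂_i : H → R satisfies: (a) R_i(ĥ) − η ≤ R̂_i(ĥ) for the empirical malfare minimizer ĥ = argmin_{h ∈ H} W(j ↦ R̂_j(h)), and (b) there exists h'' ∈ H with W(j ↦ (R̂_j(h'') if j≠i, R_i(h'') + ε if j=i)) within any δ > 0 of the infimum and R̂_i(h'') ≤ R_i(h'') + ε. Then ĥ ∈ H*. -/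
/-!
By (a) and monotonicity of `W`, the optimistic objective at `ĥ` is at most the empirical malfare
of `ĥ`; by minimality of `ĥ`, (b) and monotonicity again, that is at most the pessimistic objective
of a `δ`-optimal `h''`, hence at most the infimum plus `δ`. Let `δ → 0`.
-/

section

variable {ι α β : Type*} [DecidableEq ι]

lemma ite_eq_update (S : ι → α) (i : ι) (a : α) :
    (fun j => if j = i then a else S j) = Function.update S i a :=
  funext fun j => (Function.update_apply S i a j).symm

variable [Preorder α] [Preorder β] {W : (ι → α) → β}

lemma Monotone.map_ite_le (hW : Monotone W) {S : ι → α} {i : ι} {a : α} (h : a ≤ S i) :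
    W (fun j => if j = i then a else S j) ≤ W S :=
  hW <| (ite_eq_update S i a).symm ▸ update_le_self_iff.mpr h

lemma Monotone.le_map_ite (hW : Monotone W) {S : ι → α} {i : ι} {a : α} (h : S i ≤ a) :
    W S ≤ W (fun j => if j = i then a else S j) :=
  hW <| (ite_eq_update S i a).symm ▸ le_update_self_iff.mpr h

end

theorem emm_in_theoretical_class_general {g : ℕ} {H : Type*}
    (W : (Fin g → ℝ) → ℝ)
    (hWmono : ∀ S S' : Fin g → ℝ, (∀ j, S j ≤ S' j) → W S ≤ W S')
    (i : Fin g)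
    (Rhat : Fin g → H → ℝ) (Ri : H → ℝ)
    (η ε : ℝ)
    (hhat : H)
    (hhat_min : ∀ h : H, W (fun j => Rhat j hhat) ≤ W (fun j => Rhat j h))
    -- (a): lower deviation bound at the empirical malfare minimizer
    (ha : Ri hhat - η ≤ Rhat i hhat)
    -- (b): near-optimal h'' in the pessimistic objective with an upper deviation bound
    (hb : ∀ δ : ℝ, 0 < δ → ∃ h'' : H,
      W (fun j => if j = i then Ri h'' + ε else Rhat j h'') ≤
        (⨅ h' : H, W (fun j => if j = i then Ri h' + ε else Rhat j h')) + δ ∧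
      Rhat i h'' ≤ Ri h'' + ε) :
    W (fun j => if j = i then Ri hhat - η else Rhat j hhat) ≤
      ⨅ h' : H, W (fun j => if j = i then Ri h' + ε else Rhat j h') := by
  have hW : Monotone W := fun S S' hSS' => hWmono S S' hSS'
  refine le_of_forall_pos_le_add fun δ hδ => ?_
  obtain ⟨h'', hnear, hdev⟩ := hb δ hδ
  calc W (fun j => if j = i then Ri hhat - η else Rhat j hhat)
      ≤ W (fun j => Rhat j hhat) := hW.map_ite_le ha
    _ ≤ W (fun j => Rhat j h'') := hhat_min h''
    _ ≤ W (fun j => if j = i then Ri h'' + ε else Rhat j h'') := hW.le_map_ite hdev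
    _ ≤ _ := hnear

theorem emm_in_theoretical_class {g : ℕ} {H : Type*} [Nonempty H]
    (W : (Fin g → ℝ) → ℝ)
    (hWmono : ∀ S S' : Fin g → ℝ, (∀ j, S j ≤ S' j) → W S ≤ W S')
    (i : Fin g)
    (Rhat : Fin g → H → ℝ) (Ri : H → ℝ)
    (η ε : ℝ) (hε : 0 ≤ ε) (hηε : ε ≤ η)
    (hbdd : BddBelow (Set.range fun h' : H =>
      W (fun j => if j = i then Ri h' + ε else Rhat j h')))
    (hhat : H)
    (hhat_min : ∀ h : H, W (fun j => Rhat j hhat) ≤ W (fun j => Rhat j h))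
    -- (a): lower deviation bound at the empirical malfare minimizer
    (ha : Ri hhat - η ≤ Rhat i hhat)
    -- (b): near-optimal h'' in the pessimistic objective with an upper deviation bound
    (hb : ∀ δ : ℝ, 0 < δ → ∃ h'' : H,
      W (fun j => if j = i then Ri h'' + ε else Rhat j h'') ≤
        (⨅ h' : H, W (fun j => if j = i then Ri h' + ε else Rhat j h')) + δ ∧
      Rhat i h'' ≤ Ri h'' + ε) :
    W (fun j => if j = i then Ri hhat - η else Rhat j hhat) ≤
      ⨅ h' : H, W (fun j => if j = i then Ri h' + ε else Rhat j h') :=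
  emm_in_theoretical_class_general W hWmono i Rhat Ri η ε hhat hhat_min ha hb
end

section
/- Let f : R → R be λ-Lipschitz and g : Z → R a class of functions indexed by a set Θ, i.e., functions z ↦ g_θ(z). For a fixed sample z ∈ Z^m and Rademacher variables σ, the empirical Rademacher average of the composed class {f ∘ g_θ : θ ∈ Θ} satisfies E_σ[ sup_θ (1/m) Σ_i σ_i f(g_θ(z_i)) ] ≤ λ · E_σ[ sup_θ (1/m) Σ_i σ_i g_θ(z_i) ] (Talagrand's contraction lemma for empirical Rademacher averages). -/
/-! Ledoux–Talagrand contraction. Replace the coordinates `f (g_θ (z i))` by `λ g_θ (z i)` one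
at a time. Fixing every sign but `σ j` and pairing `σ j = ±1`, one replacement reduces to the
two-point inequality `⨆ (a + u) + ⨆ (a - u) ≤ ⨆ (a + v) + ⨆ (a - v)` when
`|u θ - u θ'| ≤ |v θ - v θ'|`: the left side is the supremum over pairs `(θ, θ')` of
`a θ + a θ' + (u θ - u θ')`, and `u θ - u θ' ≤ |v θ - v θ'|` is attained on the right at
`(θ, θ')` or at `(θ', θ)`. -/

open Finset

/-- Interpret a Boolean sign vector as a ±1 real sign. -/
def sgn (b : Bool) : ℝ := if b then 1 else -1

lemma sgn_true : sgn true = 1 := rfl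

lemma sgn_false : sgn false = -1 := rfl

lemma sgn_mul_le_abs (b : Bool) (x : ℝ) : sgn b * x ≤ |x| := by
  cases b <;> simp [sgn, le_abs_self, neg_le_abs]

theorem ciSup_add_ciSup_sub_le_of_abs_sub_le {Θ : Type*} [Nonempty Θ] {a u v : Θ → ℝ}
    (huv : ∀ θ θ', |u θ - u θ'| ≤ |v θ - v θ'|)
    (hadd : BddAbove (Set.range fun θ => a θ + v θ))
    (hsub : BddAbove (Set.range fun θ => a θ - v θ)) :
    (⨆ θ, a θ + u θ) + (⨆ θ, a θ - u θ) ≤ (⨆ θ, a θ + v θ) + (⨆ θ, a θ - v θ) := by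
  refine ciSup_add_ciSup_le fun θ θ' => ?_
  have hu : u θ - u θ' ≤ |v θ - v θ'| := (le_abs_self _).trans (huv θ θ')
  rcases le_total (v θ') (v θ) with hv | hv
  · rw [abs_of_nonneg (sub_nonneg.2 hv)] at hu
    linarith [le_ciSup hadd θ, le_ciSup hsub θ']
  · rw [abs_of_nonpos (sub_nonpos.2 hv)] at hu
    linarith [le_ciSup hadd θ', le_ciSup hsub θ]

section Rademacher

variable {ι Θ : Type*} [Fintype ι]

theorem bddAbove_range_sum_abs {v : ι → Θ → ℝ}
    (hv : ∀ σ : ι → Bool, BddAbove (Set.range fun θ => ∑ i, sgn (σ i) * v i θ)) :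
    BddAbove (Set.range fun θ => ∑ i, |v i θ|) := by
  refine ((Set.finite_univ.bddAbove_biUnion).2 fun σ _ => hv σ).mono ?_
  rintro _ ⟨θ, rfl⟩
  refine Set.mem_biUnion (Set.mem_univ fun i => decide (0 ≤ v i θ)) ⟨θ, ?_⟩
  refine Finset.sum_congr rfl fun i _ => ?_
  by_cases h : 0 ≤ v i θ
  · simp [sgn, h, abs_of_nonneg h]
  · simp [sgn, h, abs_of_neg (not_le.1 h)]

theorem bddAbove_range_sum_sgn_mul_of_abs_le {v w : ι → Θ → ℝ} (c : ι → ℝ)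
    (hv : BddAbove (Set.range fun θ => ∑ i, |v i θ|)) (hw : ∀ i θ, |w i θ| ≤ c i + |v i θ|)
    (σ : ι → Bool) : BddAbove (Set.range fun θ => ∑ i, sgn (σ i) * w i θ) := by
  obtain ⟨M, hM⟩ := hv
  refine ⟨∑ i, c i + M, ?_⟩
  rintro _ ⟨θ, rfl⟩
  calc ∑ i, sgn (σ i) * w i θ ≤ ∑ i, (c i + |v i θ|) := Finset.sum_le_sum fun i _ =>
        (sgn_mul_le_abs _ _).trans (hw i θ)
    _ ≤ ∑ i, c i + M := by rw [Finset.sum_add_distrib]; gcongr; exact hM ⟨θ, rfl⟩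

variable [DecidableEq ι]

noncomputable def rademacherSupSum (w : ι → Θ → ℝ) : ℝ :=
  ∑ σ : ι → Bool, ⨆ θ, ∑ i, sgn (σ i) * w i θ

theorem rademacherSupSum_const_mul {c : ℝ} (hc : 0 ≤ c) (w : ι → Θ → ℝ) :
    rademacherSupSum (fun i θ => c * w i θ) = c * rademacherSupSum w := by
  simp only [rademacherSupSum, Finset.mul_sum, Real.mul_iSup_of_nonneg hc, mul_left_comm c]

theorem sum_mul_iSup_mul_eq_rademacherSupSum {c d : ℝ} (hd : 0 ≤ d) (w : ι → Θ → ℝ) :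
    ∑ σ : ι → Bool, c * ⨆ θ, d * ∑ i, sgn (σ i) * w i θ = c * d * rademacherSupSum w := by
  rw [rademacherSupSum, Finset.mul_sum]
  refine Finset.sum_congr rfl fun σ _ => ?_
  rw [← Real.mul_iSup_of_nonneg hd, mul_assoc]

theorem sum_sgn_funSplitAt_symm_mul (j : ι) (b : Bool) (τ : {i // i ≠ j} → Bool) (x : ι → ℝ) :
    ∑ i, sgn ((Equiv.funSplitAt j Bool).symm (b, τ) i) * x i =
      ∑ i : {i // i ≠ j}, sgn (τ i) * x i + sgn b * x j := by
  rw [Fintype.sum_eq_add_sum_subtype_ne _ j, add_comm]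
  congr 1
  · exact Finset.sum_congr rfl fun i _ => by simp [i.2]
  · simp

theorem rademacherSupSum_eq_sum_funSplitAt (j : ι) (w : ι → Θ → ℝ) :
    rademacherSupSum w = ∑ τ : {i // i ≠ j} → Bool,
      ((⨆ θ, ∑ i : {i // i ≠ j}, sgn (τ i) * w i θ + w j θ) +
        ⨆ θ, ∑ i : {i // i ≠ j}, sgn (τ i) * w i θ - w j θ) := by
  rw [rademacherSupSum, ← (Equiv.funSplitAt j Bool).symm.sum_comp, Fintype.sum_prod_type_right]
  simp only [Fintype.sum_bool, sum_sgn_funSplitAt_symm_mul]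
  simp only [sgn_true, sgn_false, one_mul, neg_one_mul, ← sub_eq_add_neg]

theorem rademacherSupSum_le_of_abs_sub_le_single [Nonempty Θ] {w w' : ι → Θ → ℝ} (j : ι)
    (hne : ∀ i ≠ j, w i = w' i) (hj : ∀ θ θ', |w j θ - w j θ'| ≤ |w' j θ - w' j θ'|)
    (hw' : ∀ σ : ι → Bool, BddAbove (Set.range fun θ => ∑ i, sgn (σ i) * w' i θ)) :
    rademacherSupSum w ≤ rademacherSupSum w' := by
  have hrest : ∀ (τ : {i // i ≠ j} → Bool) θ, ∑ i : {i // i ≠ j}, sgn (τ i) * w i θ =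
      ∑ i : {i // i ≠ j}, sgn (τ i) * w' i θ :=
    fun τ θ => Finset.sum_congr rfl fun i _ => by rw [hne i i.2]
  rw [rademacherSupSum_eq_sum_funSplitAt j, rademacherSupSum_eq_sum_funSplitAt j w']
  simp only [hrest]
  refine Finset.sum_le_sum fun τ _ => ?_
  refine ciSup_add_ciSup_sub_le_of_abs_sub_le hj ?_ ?_
  · simpa only [sum_sgn_funSplitAt_symm_mul, sgn_true, one_mul] using
      hw' ((Equiv.funSplitAt j Bool).symm (true, τ))
  · simpa only [sum_sgn_funSplitAt_symm_mul, sgn_false, neg_one_mul, ← sub_eq_add_neg] using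
      hw' ((Equiv.funSplitAt j Bool).symm (false, τ))

theorem rademacherSupSum_le_of_abs_sub_le [Nonempty Θ] {u v : ι → Θ → ℝ}
    (huv : ∀ i θ θ', |u i θ - u i θ'| ≤ |v i θ - v i θ'|)
    (hv : ∀ σ : ι → Bool, BddAbove (Set.range fun θ => ∑ i, sgn (σ i) * v i θ)) :
    rademacherSupSum u ≤ rademacherSupSum v := by
  obtain ⟨θ₀⟩ := ‹Nonempty Θ›
  let mix (S : Finset ι) (i : ι) : Θ → ℝ := if i ∈ S then u i else v i
  have hu : ∀ i θ, |u i θ| ≤ (|u i θ₀| + |v i θ₀|) + |v i θ| := fun i θ => by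
    linarith [huv i θ θ₀, abs_sub_abs_le_abs_sub (u i θ) (u i θ₀), abs_sub (v i θ) (v i θ₀)]
  have hmix : ∀ S (σ : ι → Bool), BddAbove (Set.range fun θ => ∑ i, sgn (σ i) * mix S i θ) := by
    refine fun S => bddAbove_range_sum_sgn_mul_of_abs_le (fun i => |u i θ₀| + |v i θ₀|)
      (bddAbove_range_sum_abs hv) fun i θ => ?_
    by_cases hi : i ∈ S
    · simpa [mix, hi] using hu i θ
    · simp only [mix, hi, if_false]
      linarith [abs_nonneg (u i θ₀), abs_nonneg (v i θ₀)]
  have hreplace : ∀ S, rademacherSupSum (mix S) ≤ rademacherSupSum v := by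
    intro S
    induction S using Finset.induction_on with
    | empty => simp [mix]
    | @insert j S hj ih =>
      refine le_trans (rademacherSupSum_le_of_abs_sub_le_single j (fun i hi => ?_) (fun θ θ' => ?_)
        (hmix S)) ih
      · simp [mix, hi]
      · simpa [mix, hj] using huv j θ θ'
  simpa [mix] using hreplace univ

end Rademacher

theorem rademacher_contraction_general {Z : Type*} {Θ : Type*} [Nonempty Θ] {m : ℕ}
    (f : ℝ → ℝ) (lam : ℝ) (hlam : 0 ≤ lam)
    (hf : ∀ a b : ℝ, |f a - f b| ≤ lam * |a - b|)
    (G : Θ → Z → ℝ) (z : Fin m → Z)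
    (hbdd2 : ∀ σ : Fin m → Bool,
      BddAbove (Set.range fun θ => (1 / (m : ℝ)) * ∑ i, sgn (σ i) * G θ (z i))) :
    (∑ σ : Fin m → Bool, ((1 : ℝ) / 2) ^ m *
        ⨆ θ, (1 / (m : ℝ)) * ∑ i, sgn (σ i) * f (G θ (z i))) ≤
      lam * ∑ σ : Fin m → Bool, ((1 : ℝ) / 2) ^ m *
        ⨆ θ, (1 / (m : ℝ)) * ∑ i, sgn (σ i) * G θ (z i) := by
  rcases Nat.eq_zero_or_pos m with rfl | hm
  · simp
  have hlamG (σ : Fin m → Bool) :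
      BddAbove (Set.range fun θ => ∑ i, sgn (σ i) * (lam * G θ (z i))) := by
    obtain ⟨M, hM⟩ := hbdd2 σ
    refine ⟨lam * m * M, ?_⟩
    rintro _ ⟨θ, rfl⟩
    calc ∑ i, sgn (σ i) * (lam * G θ (z i))
        = lam * m * ((1 / m) * ∑ i, sgn (σ i) * G θ (z i)) := by
          rw [Finset.mul_sum, Finset.mul_sum]
          exact Finset.sum_congr rfl fun i _ => by field_simp
      _ ≤ lam * m * M := by gcongr; exact hM ⟨θ, rfl⟩
  have hcontr : ∀ i θ θ', |f (G θ (z i)) - f (G θ' (z i))| ≤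
      |lam * G θ (z i) - lam * G θ' (z i)| := fun i θ θ' => by
    rw [← mul_sub, abs_mul, abs_of_nonneg hlam]
    exact hf _ _
  rw [sum_mul_iSup_mul_eq_rademacherSupSum (by positivity),
    sum_mul_iSup_mul_eq_rademacherSupSum (by positivity)]
  calc _ ≤ (1 / 2) ^ m * (1 / m) * rademacherSupSum fun i θ => lam * G θ (z i) := by
        gcongr
        exact rademacherSupSum_le_of_abs_sub_le hcontr hlamG
    _ = _ := by rw [rademacherSupSum_const_mul hlam]; ring

theorem rademacher_contraction {Z : Type*} {Θ : Type*} [Nonempty Θ] {m : ℕ}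
    (f : ℝ → ℝ) (lam : ℝ) (hlam : 0 ≤ lam)
    (hf : ∀ a b : ℝ, |f a - f b| ≤ lam * |a - b|)
    (G : Θ → Z → ℝ) (z : Fin m → Z)
    (hbdd1 : ∀ σ : Fin m → Bool,
      BddAbove (Set.range fun θ => (1 / (m : ℝ)) * ∑ i, sgn (σ i) * f (G θ (z i))))
    (hbdd2 : ∀ σ : Fin m → Bool,
      BddAbove (Set.range fun θ => (1 / (m : ℝ)) * ∑ i, sgn (σ i) * G θ (z i))) :
    (∑ σ : Fin m → Bool, ((1 : ℝ) / 2) ^ m *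
        ⨆ θ, (1 / (m : ℝ)) * ∑ i, sgn (σ i) * f (G θ (z i))) ≤
      lam * ∑ σ : Fin m → Bool, ((1 : ℝ) / 2) ^ m *
        ⨆ θ, (1 / (m : ℝ)) * ∑ i, sgn (σ i) * G θ (z i) :=
  rademacher_contraction_general f lam hlam hf G z hbdd2
end
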